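/- arXiv:2007.12732 — 5 statements merged into one kernel-verified Lean document; each statement's English description precedes it below -/
import Mathlib

section
/- Every feasible point (beta_0,...,beta_{2^d-1}, M) of the investor's linear program satisfies M >= 2^{-d} * sum over m in {0,1}^d of (q(m) - r(m))^2. -/
/-- The left-shift map of the `d`-dimensional de Bruijn graph on 2 symbols. -/
def deBruijnShift (d : ℕ) (m : Fin d → Bool) (c : Bool) : Fin d → Bool :=
  fun i => if h : (i : ℕ) + 1 < d then m ⟨(i : ℕ) + 1, h⟩ else c

/-- A simple cycle of the de Bruijn graph, recorded as the list of its edges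
`(vertex, label)`: each edge leads to the next vertex (cyclically), and no
vertex is repeated. -/
def IsSimpleCycleDB (d : ℕ) (L : List ((Fin d → Bool) × Bool)) : Prop :=
  L ≠ [] ∧ (L.map Prod.fst).Nodup ∧
  ∀ i : Fin L.length,
    deBruijnShift d (L.get i).1 (L.get i).2
      = (L.get ⟨((i : ℕ) + 1) % L.length, Nat.mod_lt _ i.pos⟩).1

/-!
Labelling each vertex `m` of the de Bruijn graph by its first bit `m₀`, the maps
`m ↦ deBruijnShift d m m₀` (cyclic rotation) and `m ↦ deBruijnShift d m (!m₀)` are permutations of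
the vertices, and the orbit of each vertex is a simple cycle. Summing the constraints over the
orbits of either permutation bounds `∑ₘ [(q m - r m)² ∓ β m]` by `2^d M`. At every vertex the two
permutations leave by different edges, so adding the two bounds cancels `β`.
-/

open Function Finset

namespace Function

variable {V M : Type*}

theorem sum_range_mul_minimalPeriod_iterate [AddCommMonoid M] (f : V → V) (u : V → M) (x : V)
    (n : ℕ) :
    ∑ k ∈ range (n * minimalPeriod f x), u (f^[k] x)
      = n • ∑ k ∈ range (minimalPeriod f x), u (f^[k] x) := by
  induction n with
  | zero => simp
  | succ n ih =>
    rw [Nat.succ_mul, sum_range_add, ih, succ_nsmul]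
    refine congrArg _ (sum_congr rfl fun k _ => ?_)
    rw [add_comm, iterate_add_apply, ((isPeriodicPt_minimalPeriod f x).const_mul n).eq]

/-- Summing `u ∘ f^[k]` over `k < (card V)!`, a common multiple of all periods, counts every orbit
sum a whole number of times. -/
theorem Injective.sum_nonpos_of_sum_orbit_nonpos [Fintype V] [AddCommMonoid M] [LinearOrder M]
    [IsOrderedAddMonoid M] {f : V → V} (hf : Injective f) {u : V → M}
    (h : ∀ x, ∑ k ∈ range (minimalPeriod f x), u (f^[k] x) ≤ 0) : ∑ x, u x ≤ 0 := by
  set N := (Fintype.card V).factorial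
  have hN : f^[N] = id := injective_iff_iterate_factorial_card_eq_id.mp hf
  rw [← nsmul_nonpos_iff (Nat.factorial_ne_zero _)]
  calc N • ∑ x, u x = ∑ k ∈ range N, ∑ x, u (f^[k] x) := by
        simp only [fun k => (hf.iterate k).bijective_of_finite.sum_comp u, sum_const, card_range]
    _ = ∑ x, ∑ k ∈ range N, u (f^[k] x) := sum_comm
    _ ≤ 0 := sum_nonpos fun x _ => by
        obtain ⟨n, hn⟩ := isPeriodicPt_iff_minimalPeriod_dvd.mp (congrFun hN x)
        rw [hn, mul_comm, sum_range_mul_minimalPeriod_iterate]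
        exact nsmul_nonpos (h x) n

end Function

section DeBruijn

variable {d : ℕ}

def headBit (m : Fin d → Bool) : Bool :=
  if h : 0 < d then m ⟨0, h⟩ else false

theorem deBruijnShift_injective {c : (Fin d → Bool) → Bool}
    (hc : ∀ (hd : 0 < d) (a b : Fin d → Bool), c a = c b → a ⟨0, hd⟩ = b ⟨0, hd⟩) :
    Injective fun m => deBruijnShift d m (c m) := by
  intro a b hab
  funext i
  have hd : 0 < d := i.pos
  have hlast := congrFun hab ⟨d - 1, by omega⟩
  simp only [deBruijnShift, dif_neg (show ¬ (d - 1 + 1 < d) by omega)] at hlast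
  rcases i with ⟨_ | j, hj⟩
  · exact hc hd a b hlast
  · simpa [deBruijnShift, hj] using congrFun hab ⟨j, by omega⟩

theorem deBruijnShift_headBit_injective : Injective fun m : Fin d → Bool => deBruijnShift d m (headBit m) :=
  deBruijnShift_injective fun hd a b h => by simpa [headBit, hd] using h

theorem deBruijnShift_not_headBit_injective :
    Injective fun m : Fin d → Bool => deBruijnShift d m (!headBit m) :=
  deBruijnShift_injective fun hd a b h => by simpa [headBit, hd] using h

noncomputable def orbitEdges {V : Type*} (f : V → V) (c : V → Bool) (x : V) : List (V × Bool) :=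
  List.ofFn fun k : Fin (minimalPeriod f x) => (f^[k] x, c (f^[k] x))

theorem isSimpleCycleDB_orbitEdges {f : (Fin d → Bool) → Fin d → Bool}
    {c : (Fin d → Bool) → Bool}
    (hfc : ∀ m, deBruijnShift d m (c m) = f m) {x : Fin d → Bool} (hx : x ∈ periodicPts f) :
    IsSimpleCycleDB d (orbitEdges f c x) := by
  have hp := minimalPeriod_pos_of_mem_periodicPts hx
  unfold orbitEdges
  refine ⟨?_, ?_, fun i => ?_⟩
  · simp [← List.length_eq_zero_iff, hp.ne']
  · rw [List.map_ofFn, List.nodup_ofFn]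
    exact fun k l hkl => Fin.ext (iterate_injOn_Iio_minimalPeriod k.2 l.2 hkl)
  · simp only [List.get_ofFn, Fin.val_cast, List.length_ofFn]
    rw [hfc, ← iterate_succ_apply' f, iterate_mod_minimalPeriod_eq]

theorem sum_le_of_isSimpleCycleDB_sum_le {g : (Fin d → Bool) × Bool → ℝ} {M : ℝ}
    (hg : ∀ L, IsSimpleCycleDB d L → (L.map g).sum ≤ L.length * M)
    {c : (Fin d → Bool) → Bool} (hc : Injective fun m => deBruijnShift d m (c m)) :
    ∑ m, g (m, c m) ≤ 2 ^ d * M := by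
  have key : ∑ m, (g (m, c m) - M) ≤ 0 := hc.sum_nonpos_of_sum_orbit_nonpos fun x => by
    have := hg _ (isSimpleCycleDB_orbitEdges (fun _ => rfl) (hc.mem_periodicPts x))
    rw [orbitEdges, List.map_ofFn, List.sum_ofFn, List.length_ofFn] at this
    rw [sum_sub_distrib, sum_const, card_range, nsmul_eq_mul, sub_nonpos,
      ← Fin.sum_univ_eq_sum_range]
    exact this
  simpa [sum_sub_distrib] using key

end DeBruijn

/-- Every feasible point `(β, M)` of the investor's linear program (one
constraint per simple cycle `s`: `∑_{m ∈ s} [(q m - r m)² - b_{s,m} β m] ≤ |s| M`)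
satisfies `M ≥ 2^{-d} ∑_m (q m - r m)²`. -/
theorem investor_LP_lower_bound (d : ℕ) (q r β : (Fin d → Bool) → ℝ) (M : ℝ)
    (hfeas : ∀ L : List ((Fin d → Bool) × Bool), IsSimpleCycleDB d L →
      (L.map fun e => (q e.1 - r e.1) ^ 2 - (if e.2 then β e.1 else -β e.1)).sum
        ≤ (L.length : ℝ) * M) :
    (∑ m : Fin d → Bool, (q m - r m) ^ 2) / 2 ^ d ≤ M := by
  set g : (Fin d → Bool) × Bool → ℝ :=
    fun e => (q e.1 - r e.1) ^ 2 - (if e.2 then β e.1 else -β e.1)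
  have hpair : ∀ m b, g (m, b) + g (m, !b) = 2 * (q m - r m) ^ 2 := by
    intro m b
    cases b <;>
      simp only [g, Bool.not_false, Bool.not_true, Bool.false_eq_true, ↓reduceIte] <;> ring
  have hsum := add_le_add (sum_le_of_isSimpleCycleDB_sum_le hfeas deBruijnShift_headBit_injective)
    (sum_le_of_isSimpleCycleDB_sum_le hfeas deBruijnShift_not_headBit_injective)
  rw [← sum_add_distrib] at hsum
  simp only [hpair, ← mul_sum] at hsum
  rw [div_le_iff₀ (by positivity)]
  linarith
end

section
/- Every feasible point (beta_0,...,beta_{2^d-1}, M) of the market's linear program satisfies M <= 2^{-d} * sum over m in {0,1}^d of (q(m) - r(m))^2. -/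
open Finset Function

theorem Function.Periodic.sum_range_mul {M : Type*} [AddCommMonoid M] {g : ℕ → M} {k : ℕ}
    (hg : Periodic g k) (j : ℕ) : ∑ i ∈ range (k * j), g i = j • ∑ i ∈ range k, g i := by
  induction j with
  | zero => simp
  | succ j ih =>
    rw [Nat.mul_succ, sum_range_add, ih, succ_nsmul]
    congr 1
    refine sum_congr rfl fun x _ => ?_
    simpa [add_comm, mul_comm] using hg.nat_mul j x

/-- Every orbit length divides `N = (card α)!`, so the orbit bounds, taken over `N` steps from
every starting point, count each point exactly `N` times. -/
theorem Function.Injective.card_nsmul_le_sum_of_orbits {α M : Type*} [Fintype α] [AddCommMonoid M]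
    [LinearOrder M] [IsOrderedCancelAddMonoid M] {σ : α → α} (hσ : Injective σ) (f : α → M)
    {c : M} (horbit : ∀ a, minimalPeriod σ a • c ≤
      ∑ i ∈ range (minimalPeriod σ a), f (σ^[i] a)) :
    Fintype.card α • c ≤ ∑ a, f a := by
  set N := (Fintype.card α).factorial
  have hN : σ^[N] = id := injective_iff_iterate_factorial_card_eq_id.mp hσ
  have hlong : ∀ a, N • c ≤ ∑ i ∈ range N, f (σ^[i] a) := by
    intro a
    obtain ⟨j, hj⟩ : minimalPeriod σ a ∣ N :=
      IsPeriodicPt.minimalPeriod_dvd (congrFun hN a)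
    have hper : Periodic (fun i => f (σ^[i] a)) (minimalPeriod σ a) := fun i => by
      simp only [iterate_add_minimalPeriod_eq]
    rw [hj, hper.sum_range_mul, mul_nsmul]
    exact nsmul_le_nsmul_right (horbit a) j
  have hinv : ∀ i, ∑ a, f (σ^[i] a) = ∑ a, f a := fun i =>
    (Finite.injective_iff_bijective.mp (hσ.iterate i)).sum_comp f
  rw [← nsmul_le_nsmul_iff_right (Nat.factorial_ne_zero (Fintype.card α))]
  calc N • Fintype.card α • c = ∑ a : α, N • c := by
        rw [sum_const, card_univ, smul_comm]
    _ ≤ ∑ a, ∑ i ∈ range N, f (σ^[i] a) := sum_le_sum fun a _ => hlong a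
    _ = N • ∑ a, f a := by
        rw [sum_comm, sum_congr rfl fun i _ => hinv i, sum_const, card_range]

def deBruijnSuccessor (d : ℕ) (lab : (Fin d → Bool) → Bool) (m : Fin d → Bool) : Fin d → Bool :=
  deBruijnShift d m (lab m)

noncomputable def orbitCycle (d : ℕ) (lab : (Fin d → Bool) → Bool) (a : Fin d → Bool) :
    List ((Fin d → Bool) × Bool) :=
  List.ofFn fun i : Fin (minimalPeriod (deBruijnSuccessor d lab) a) =>
    ((deBruijnSuccessor d lab)^[i] a, lab ((deBruijnSuccessor d lab)^[i] a))

def firstBit (d : ℕ) (m : Fin d → Bool) : Bool :=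
  if h : 0 < d then m ⟨0, h⟩ else true

section DeBruijn

variable {d : ℕ}

theorem deBruijnSuccessor_injective {g : Bool → Bool} (hg : Injective g) :
    Injective (deBruijnSuccessor d (g ∘ firstBit d)) := by
  intro m m' hmm
  obtain _ | n := d
  · exact Subsingleton.elim m m'
  have hshift (i : Fin (n + 1)) := congrFun hmm i
  have hfirst : m 0 = m' 0 := by
    simpa [deBruijnSuccessor, deBruijnShift, firstBit, hg.eq_iff] using hshift (Fin.last n)
  funext j
  induction j using Fin.cases with
  | zero => exact hfirst
  | succ i => simpa [deBruijnSuccessor, deBruijnShift, Fin.succ] using hshift i.castSucc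

@[simp]
theorem length_orbitCycle (lab : (Fin d → Bool) → Bool) (a : Fin d → Bool) :
    (orbitCycle d lab a).length = minimalPeriod (deBruijnSuccessor d lab) a :=
  List.length_ofFn

@[simp]
theorem getElem_orbitCycle (lab : (Fin d → Bool) → Bool) (a : Fin d → Bool) (i : ℕ)
    (hi : i < (orbitCycle d lab a).length) :
    (orbitCycle d lab a)[i] =
      ((deBruijnSuccessor d lab)^[i] a, lab ((deBruijnSuccessor d lab)^[i] a)) :=
  List.getElem_ofFn ..

theorem isSimpleCycleDB_orbitCycle (lab : (Fin d → Bool) → Bool) {a : Fin d → Bool}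
    (ha : a ∈ periodicPts (deBruijnSuccessor d lab)) : IsSimpleCycleDB d (orbitCycle d lab a) := by
  refine ⟨?_, ?_, fun i => ?_⟩
  · exact List.ne_nil_of_length_pos (by simpa using minimalPeriod_pos_of_mem_periodicPts ha)
  · rw [orbitCycle, List.map_ofFn, List.nodup_ofFn]
    exact fun i j hij => Fin.ext (iterate_injOn_Iio_minimalPeriod i.2 j.2 hij)
  · simp only [List.get_eq_getElem, getElem_orbitCycle, length_orbitCycle]
    rw [iterate_mod_minimalPeriod_eq, iterate_succ_apply']
    rfl

theorem sum_map_orbitCycle {M : Type*} [AddCommMonoid M] (c : (Fin d → Bool) × Bool → M)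
    (lab : (Fin d → Bool) → Bool) (a : Fin d → Bool) :
    ((orbitCycle d lab a).map c).sum = ∑ i ∈ range (minimalPeriod (deBruijnSuccessor d lab) a),
      c ((deBruijnSuccessor d lab)^[i] a, lab ((deBruijnSuccessor d lab)^[i] a)) := by
  rw [orbitCycle, List.map_ofFn, List.sum_ofFn, sum_range]
  rfl

theorem two_pow_mul_le_sum_of_simpleCycle_bound (c : (Fin d → Bool) × Bool → ℝ) {M : ℝ}
    (hcycle : ∀ L, IsSimpleCycleDB d L → (L.length : ℝ) * M ≤ (L.map c).sum)
    {lab : (Fin d → Bool) → Bool} (hlab : Injective (deBruijnSuccessor d lab)) :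
    2 ^ d * M ≤ ∑ m, c (m, lab m) := by
  have h := hlab.card_nsmul_le_sum_of_orbits (fun m => c (m, lab m)) (c := M) fun a => by
    have hL := hcycle _ (isSimpleCycleDB_orbitCycle lab (hlab.mem_periodicPts a))
    rwa [sum_map_orbitCycle, length_orbitCycle, ← nsmul_eq_mul] at hL
  simpa using h

end DeBruijn

/-- Every feasible point `(β, M)` of the market's linear program (one
constraint per simple cycle `s`: `∑_{m ∈ s} [(q m - r m)² - b_{s,m} β m] ≥ |s| M`)
satisfies `M ≤ 2^{-d} ∑_m (q m - r m)²`. -/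
theorem market_LP_upper_bound (d : ℕ) (q r β : (Fin d → Bool) → ℝ) (M : ℝ)
    (hfeas : ∀ L : List ((Fin d → Bool) × Bool), IsSimpleCycleDB d L →
      (L.length : ℝ) * M ≤
        (L.map fun e => (q e.1 - r e.1) ^ 2 - (if e.2 then β e.1 else -β e.1)).sum) :
    M ≤ (∑ m : Fin d → Bool, (q m - r m) ^ 2) / 2 ^ d := by
  have hfirst := two_pow_mul_le_sum_of_simpleCycle_bound _ hfeas
    (deBruijnSuccessor_injective (g := id) injective_id)
  have hflip := two_pow_mul_le_sum_of_simpleCycle_bound _ hfeas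
    (deBruijnSuccessor_injective (g := not) Bool.not_injective)
  have hpair (m : Fin d → Bool) :
      ((q m - r m) ^ 2 - if firstBit d m then β m else -β m) +
        ((q m - r m) ^ 2 - if !firstBit d m then β m else -β m) = 2 * (q m - r m) ^ 2 := by
    cases firstBit d m <;>
      simp only [Bool.not_false, Bool.not_true, Bool.false_eq_true, ↓reduceIte] <;> ring
  have hsum := add_le_add hfirst hflip
  simp only [comp_apply, id, ← sum_add_distrib, hpair, ← mul_sum] at hsum
  rw [le_div_iff₀ (by positivity)]
  linarith
end

section
/- If there exists (beta_0,...,beta_{2^d-1}) achieving indifference, i.e. such that for every simple cycle s of the d-dimensional de Bruijn graph the average (1/|s|) * sum over vertices m on s of [ (q(m)-r(m))^2 - b_{s,m} beta_m ] takes the same value M for all s, then M = 2^{-d} * sum over m of (q(m)-r(m))^2, and this common value is simultaneously the optimal value of both the investor's and the market's linear programs. -/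
/-- Cycle-weighted regret sum `∑_{m ∈ s} [(q m - r m)² - b_{s,m} β m]`. -/
def cycleSum (d : ℕ) (q r β : (Fin d → Bool) → ℝ)
    (L : List ((Fin d → Bool) × Bool)) : ℝ :=
  (L.map fun e => (q e.1 - r e.1) ^ 2 - (if e.2 then β e.1 else -β e.1)).sum

/-- Feasibility for the investor's linear program. -/
def InvestorFeasible (d : ℕ) (q r β : (Fin d → Bool) → ℝ) (M : ℝ) : Prop :=
  ∀ L, IsSimpleCycleDB d L → cycleSum d q r β L ≤ (L.length : ℝ) * M

/-- Feasibility for the market's linear program. -/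
def MarketFeasible (d : ℕ) (q r β : (Fin d → Bool) → ℝ) (M : ℝ) : Prop :=
  ∀ L, IsSimpleCycleDB d L → (L.length : ℝ) * M ≤ cycleSum d q r β L

open Function Finset

theorem Equiv.Perm.minimalPeriod_pos {α : Type*} [Finite α] (σ : Equiv.Perm α) (x : α) :
    0 < minimalPeriod σ x :=
  minimalPeriod_pos_of_mem_periodicPts (σ.injective.mem_periodicPts x)

section OrbitAverage

variable {α : Type*} [Fintype α] (σ : Equiv.Perm α)

theorem Equiv.Perm.sum_div_minimalPeriod_sum_iterate (w : α → ℝ) :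
    ∑ x, (∑ k ∈ range (minimalPeriod σ x), w (σ^[k] x)) / minimalPeriod σ x = ∑ x, w x := by
  set p := minimalPeriod σ
  set N := Fintype.card α
  have hp_iterate (k : ℕ) (x : α) : p (σ^[k] x) = p x :=
    minimalPeriod_apply_iterate (σ.injective.mem_periodicPts x) k
  have truncate (x : α) (f : ℕ → ℝ) :
      ∑ k ∈ range N, (if k < p x then f k else 0) = ∑ k ∈ range (p x), f k := by
    rw [← sum_filter]
    congr 1
    ext k
    simp only [mem_filter, mem_range, and_iff_right_iff_imp]
    exact fun hk => hk.trans_le minimalPeriod_le_card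
  -- Each `σ^[k]` permutes `α` and preserves `p`, so the `k`-th terms may be reindexed by it.
  calc ∑ x, (∑ k ∈ range (p x), w (σ^[k] x)) / p x
      = ∑ k ∈ range N, ∑ x, if k < p x then w (σ^[k] x) / p x else 0 := by
        rw [sum_comm]
        refine sum_congr rfl fun x _ => ?_
        rw [sum_div, truncate]
    _ = ∑ k ∈ range N, ∑ x, if k < p x then w x / p x else 0 := by
        refine sum_congr rfl fun k _ => ?_
        rw [← Equiv.sum_comp (σ ^ k) (fun y => if k < p y then w y / p y else 0)]
        simp only [Equiv.Perm.coe_pow, hp_iterate]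
    _ = ∑ x, w x := by
        rw [sum_comm]
        refine sum_congr rfl fun x _ => ?_
        rw [truncate (f := fun _ => w x / p x), sum_const, card_range, nsmul_eq_mul]
        have hp : (p x : ℝ) ≠ 0 := mod_cast (σ.minimalPeriod_pos x).ne'
        field_simp

theorem Equiv.Perm.sum_le_card_mul_of_forall_sum_iterate_le {w : α → ℝ} {M : ℝ}
    (h : ∀ x, ∑ k ∈ range (minimalPeriod σ x), w (σ^[k] x) ≤ minimalPeriod σ x * M) :
    ∑ x, w x ≤ Fintype.card α * M := by
  rw [← σ.sum_div_minimalPeriod_sum_iterate, ← card_univ, ← nsmul_eq_mul, ← sum_const]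
  refine sum_le_sum fun x _ => ?_
  rw [div_le_iff₀ (mod_cast σ.minimalPeriod_pos x)]
  linarith [h x]

theorem Equiv.Perm.card_mul_le_sum_of_forall_le_sum_iterate {w : α → ℝ} {M : ℝ}
    (h : ∀ x, minimalPeriod σ x * M ≤ ∑ k ∈ range (minimalPeriod σ x), w (σ^[k] x)) :
    Fintype.card α * M ≤ ∑ x, w x := by
  have := σ.sum_le_card_mul_of_forall_sum_iterate_le (w := -w) (M := -M) fun x => by
    simpa only [Pi.neg_apply, sum_neg_distrib, mul_neg, neg_le_neg_iff] using h x
  simpa only [Pi.neg_apply, sum_neg_distrib, mul_neg, neg_le_neg_iff] using this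

end OrbitAverage

noncomputable def orbitList {α : Type*} (f : α → α) (x : α) : List α :=
  (List.range (minimalPeriod f x)).map fun k => f^[k] x

@[simp]
theorem length_orbitList {α : Type*} (f : α → α) (x : α) :
    (orbitList f x).length = minimalPeriod f x := by
  simp [orbitList]

theorem get_orbitList {α : Type*} (f : α → α) (x : α) (i : Fin (orbitList f x).length) :
    (orbitList f x).get i = f^[i] x := by
  rw [List.get_eq_getElem]
  simp [orbitList]

theorem sum_map_orbitList {α : Type*} (f : α → α) (x : α) (w : α → ℝ) :
    ((orbitList f x).map w).sum = ∑ k ∈ range (minimalPeriod f x), w (f^[k] x) := by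
  rw [orbitList, List.map_map, sum_eq_multiset_sum]
  rfl

theorem Fin.univ_val_map_snoc {n : ℕ} {α : Type*} (v : Fin n → α) (a : α) :
    univ.val.map (Fin.snoc v a : Fin (n + 1) → α) = a ::ₘ univ.val.map v := by
  simp only [Fin.univ_val_map, List.ofFn_succ', Fin.snoc_castSucc, Fin.snoc_last,
    List.concat_eq_append, ← Multiset.coe_add]
  rw [add_comm]
  rfl

theorem Equiv.Perm.univ_val_map_comp {ι α : Type*} [Fintype ι] (w : ι → α) (τ : Equiv.Perm ι) :
    univ.val.map (w ∘ τ) = univ.val.map w := by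
  rw [← Multiset.map_map, Multiset.map_univ_val_equiv]

namespace DeBruijn

def edgeEquivWord (d : ℕ) {α : Type*} : (Fin d → α) × α ≃ (Fin (d + 1) → α) where
  toFun e := Fin.snoc e.1 e.2
  invFun w := (Fin.init w, w (Fin.last d))
  left_inv e := by simp
  right_inv w := by simp

/-- Rotation of the word `m ++ [c]` by one letter: it sends the edge `(m, c)` to an edge leaving
`deBruijnShift d m c` (see `edgeSucc_fst`), so its orbits are closed walks. -/
def edgeSucc (d : ℕ) {α : Type*} : Equiv.Perm ((Fin d → α) × α) :=
  (edgeEquivWord d).symm.permCongr ((finRotate (d + 1)).symm.arrowCongr (Equiv.refl α))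

theorem edgeEquivWord_edgeSucc (d : ℕ) {α : Type*} (e : (Fin d → α) × α) :
    edgeEquivWord d (edgeSucc d e) = edgeEquivWord d e ∘ finRotate (d + 1) := by
  simp only [edgeSucc, Equiv.permCongr_apply, Equiv.symm_symm, Equiv.apply_symm_apply]
  rfl

theorem edgeSucc_fst (d : ℕ) (e : (Fin d → Bool) × Bool) :
    (edgeSucc d e).1 = deBruijnShift d e.1 e.2 := by
  funext i
  have := congrFun (edgeEquivWord_edgeSucc d e) i.castSucc
  simp only [edgeEquivWord, Equiv.coe_fn_mk, Fin.snoc_castSucc, comp_apply] at this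
  rw [this, show finRotate (d + 1) i.castSucc = i.succ from finRotate_of_lt i.isLt]
  simp only [Fin.snoc, deBruijnShift, Fin.val_succ, Fin.castLT, cast_eq]

def edgeLetters {d : ℕ} {α : Type*} (e : (Fin d → α) × α) : Multiset α :=
  e.2 ::ₘ univ.val.map e.1

theorem edgeLetters_eq_univ_val_map {d : ℕ} {α : Type*} (e : (Fin d → α) × α) :
    edgeLetters e = univ.val.map (edgeEquivWord d e) :=
  (Fin.univ_val_map_snoc e.1 e.2).symm

theorem edgeLetters_edgeSucc_iterate (d : ℕ) {α : Type*} (e : (Fin d → α) × α) (k : ℕ) :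
    edgeLetters ((edgeSucc d)^[k] e) = edgeLetters e := by
  induction k with
  | zero => rfl
  | succ k ih =>
    rw [iterate_succ_apply', edgeLetters_eq_univ_val_map, edgeEquivWord_edgeSucc,
      Equiv.Perm.univ_val_map_comp, ← edgeLetters_eq_univ_val_map, ih]

theorem eq_of_fst_eq_of_edgeLetters_eq {d : ℕ} {α : Type*} {e e' : (Fin d → α) × α}
    (h_fst : e.1 = e'.1) (h_letters : edgeLetters e = edgeLetters e') : e = e' := by
  rw [edgeLetters, edgeLetters, h_fst, Multiset.cons_inj_left] at h_letters
  exact Prod.ext h_fst h_letters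

theorem eq_of_fst_edgeSucc_iterate_eq {d : ℕ} {α : Type*} {e : (Fin d → α) × α} {k l : ℕ}
    (hk : k < minimalPeriod (edgeSucc d) e) (hl : l < minimalPeriod (edgeSucc d) e)
    (h : ((edgeSucc d)^[k] e).1 = ((edgeSucc d)^[l] e).1) : k = l :=
  (iterate_eq_iterate_iff_of_lt_minimalPeriod hk hl).mp <|
    eq_of_fst_eq_of_edgeLetters_eq h <| by
      rw [edgeLetters_edgeSucc_iterate, edgeLetters_edgeSucc_iterate]

theorem isSimpleCycleDB_orbitList (d : ℕ) (e : (Fin d → Bool) × Bool) :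
    IsSimpleCycleDB d (orbitList (edgeSucc d) e) := by
  refine ⟨?_, ?_, fun i => ?_⟩
  · simp [orbitList, ((edgeSucc d).minimalPeriod_pos e).ne']
  · rw [orbitList, List.map_map]
    exact List.nodup_range.map_on fun k hk l hl =>
      eq_of_fst_edgeSucc_iterate_eq (List.mem_range.1 hk) (List.mem_range.1 hl)
  · simp only [get_orbitList, length_orbitList]
    rw [← edgeSucc_fst, ← iterate_succ_apply' (edgeSucc d), iterate_mod_minimalPeriod_eq]

def edgeRegret {d : ℕ} (q r β : (Fin d → Bool) → ℝ) (e : (Fin d → Bool) × Bool) : ℝ :=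
  (q e.1 - r e.1) ^ 2 - (if e.2 then β e.1 else -β e.1)

theorem sum_edgeRegret {d : ℕ} (q r β : (Fin d → Bool) → ℝ) :
    ∑ e, edgeRegret q r β e = 2 * ∑ m, (q m - r m) ^ 2 := by
  rw [Fintype.sum_prod_type, mul_sum]
  refine sum_congr rfl fun m _ => ?_
  simp only [edgeRegret, Fintype.sum_bool, if_true, Bool.false_eq_true, if_false]
  ring

theorem cycleSum_orbitList {d : ℕ} (q r β : (Fin d → Bool) → ℝ) (e : (Fin d → Bool) × Bool) :
    cycleSum d q r β (orbitList (edgeSucc d) e) =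
      ∑ k ∈ range (minimalPeriod (edgeSucc d) e), edgeRegret q r β ((edgeSucc d)^[k] e) :=
  sum_map_orbitList _ _ _

theorem card_edges (d : ℕ) : Fintype.card ((Fin d → Bool) × Bool) = 2 ^ (d + 1) := by
  simp [Fintype.card_prod, pow_succ]

end DeBruijn

open DeBruijn

theorem InvestorFeasible.sum_sq_le {d : ℕ} {q r β : (Fin d → Bool) → ℝ} {M : ℝ}
    (h : InvestorFeasible d q r β M) : ∑ m, (q m - r m) ^ 2 ≤ 2 ^ d * M := by
  have := (edgeSucc d).sum_le_card_mul_of_forall_sum_iterate_le (w := edgeRegret q r β) fun e => by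
    rw [← cycleSum_orbitList, ← length_orbitList]
    exact h _ (isSimpleCycleDB_orbitList d e)
  rw [sum_edgeRegret, card_edges, Nat.cast_pow, Nat.cast_ofNat, pow_succ] at this
  linarith

theorem MarketFeasible.le_sum_sq {d : ℕ} {q r β : (Fin d → Bool) → ℝ} {M : ℝ}
    (h : MarketFeasible d q r β M) : 2 ^ d * M ≤ ∑ m, (q m - r m) ^ 2 := by
  have := (edgeSucc d).card_mul_le_sum_of_forall_le_sum_iterate (w := edgeRegret q r β) fun e => by
    rw [← cycleSum_orbitList, ← length_orbitList]
    exact h _ (isSimpleCycleDB_orbitList d e)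
  rw [sum_edgeRegret, card_edges, Nat.cast_pow, Nat.cast_ofNat, pow_succ] at this
  linarith

/-- If some `β` achieves indifference — every simple cycle has the same
cycle-averaged value `M` — then `M = 2^{-d} ∑_m (q m - r m)²`, and this common
value is simultaneously the optimal value of the investor's linear program
(a minimum) and of the market's linear program (a maximum). -/
theorem indifference_optimal_values (d : ℕ) (q r β : (Fin d → Bool) → ℝ) (M : ℝ)
    (hind : ∀ L, IsSimpleCycleDB d L → cycleSum d q r β L = (L.length : ℝ) * M) :
    M = (∑ m : Fin d → Bool, (q m - r m) ^ 2) / 2 ^ d ∧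
    IsLeast {M' : ℝ | ∃ β', InvestorFeasible d q r β' M'} M ∧
    IsGreatest {M' : ℝ | ∃ β', MarketFeasible d q r β' M'} M := by
  have hI : InvestorFeasible d q r β M := fun L hL => (hind L hL).le
  have hM : MarketFeasible d q r β M := fun L hL => (hind L hL).ge
  have hS : ∑ m, (q m - r m) ^ 2 = 2 ^ d * M := le_antisymm hI.sum_sq_le hM.le_sum_sq
  have h2d : (0 : ℝ) < 2 ^ d := by positivity
  refine ⟨by rw [hS, mul_div_cancel_left₀ _ h2d.ne'], ⟨⟨β, hI⟩, ?_⟩, ⟨β, hM⟩, ?_⟩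
  · rintro M' ⟨β', hI'⟩
    exact le_of_mul_le_mul_left (hS ▸ hI'.sum_sq_le) h2d
  · rintro M' ⟨β', hM'⟩
    exact le_of_mul_le_mul_left (hS ▸ hM'.le_sum_sq) h2d
end

section
/- For C > 0 and T real, the function u(t, xi) = sqrt(T - t) * G(xi / sqrt(T - t)), with G(z) = sqrt(C/(2*pi)) * exp(-z^2/(2C)) + (z/2) * erf(z/sqrt(2C)), satisfies the backward heat equation u_t + (C/2) u_{xi xi} = 0 for all t < T and xi in R, and u(t, xi) -> |xi|/2 as t -> T for each fixed xi. -/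
/-!
Substituting `u = √(T - t) · G(ξ / √(T - t))` gives
`u_t + (C/2) u_ξξ = -(G - z G' - C G'') / (2 √(T - t))` at `z = ξ / √(T - t)`, and for the
given `G` one has `G' = erf(z/√(2C))/2` and `G''` the centred Gaussian density of variance `C`,
so the bracket vanishes. As `t → T`, the Gaussian part of `u` is `O(√(T - t))`, while
`(ξ/2) erf(ξ/√(2C(T - t))) → (ξ/2) sign ξ = |ξ|/2`.
-/

/-- The error function `erf x = (2/√π) ∫₀ˣ e^{-s²} ds`. -/
noncomputable def myErf (x : ℝ) : ℝ :=
  (2 / Real.sqrt Real.pi) * ∫ s in (0:ℝ)..x, Real.exp (-(s ^ 2))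

/-- `G(z) = √(C/(2π)) e^{-z²/(2C)} + (z/2) erf(z/√(2C))`. -/
noncomputable def Gfun (C z : ℝ) : ℝ :=
  Real.sqrt (C / (2 * Real.pi)) * Real.exp (-(z ^ 2) / (2 * C)) +
    (z / 2) * myErf (z / Real.sqrt (2 * C))

open Real Filter Set MeasureTheory
open scoped Topology

theorem hasDerivAt_myErf (x : ℝ) : HasDerivAt myErf (2 / √π * exp (-(x ^ 2))) x :=
  ((continuous_id.pow 2).neg.rexp.integral_hasStrictDerivAt 0 x).hasDerivAt.const_mul _

theorem myErf_neg (x : ℝ) : myErf (-x) = -myErf x := by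
  have h := intervalIntegral.integral_comp_neg (a := 0) (b := x) fun s : ℝ => exp (-(s ^ 2))
  simp only [neg_sq, neg_zero] at h
  rw [myErf, myErf, intervalIntegral.integral_symm (-x) 0, ← h, mul_neg]

theorem tendsto_myErf_atTop : Tendsto myErf atTop (𝓝 1) := by
  have hint : IntegrableOn (fun s : ℝ => exp (-(s ^ 2))) (Ioi 0) := by
    simpa using (integrable_exp_neg_mul_sq one_pos).integrableOn (s := Ioi 0)
  have hval : ∫ s in Ioi (0 : ℝ), exp (-(s ^ 2)) = √π / 2 := by
    simpa using integral_gaussian_Ioi 1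
  have h := (intervalIntegral_tendsto_integral_Ioi 0 hint tendsto_id).const_mul (2 / √π)
  rw [hval, div_mul_div_cancel₀ (sqrt_ne_zero'.2 pi_pos), div_self two_ne_zero] at h
  exact h

theorem tendsto_mul_myErf_mul_atTop (x : ℝ) :
    Tendsto (fun s => x * myErf (x * s)) atTop (𝓝 |x|) := by
  rcases lt_trichotomy x 0 with hx | rfl | hx
  · have h := (tendsto_myErf_atTop.comp (tendsto_id.const_mul_atTop (neg_pos.2 hx))).const_mul (-x)
    rw [mul_one] at h
    rw [abs_of_neg hx]
    refine h.congr fun s => ?_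
    rw [Function.comp_apply, id, neg_mul x s, myErf_neg]
    ring
  · simp
  · have h := (tendsto_myErf_atTop.comp (tendsto_id.const_mul_atTop hx)).const_mul x
    rw [mul_one] at h
    rwa [abs_of_pos hx]

noncomputable def gaussianDensity (C z : ℝ) : ℝ :=
  exp (-(z ^ 2) / (2 * C)) / √(2 * π * C)

theorem mul_gaussianDensity {C : ℝ} (hC : 0 < C) (z : ℝ) :
    C * gaussianDensity C z = √(C / (2 * π)) * exp (-(z ^ 2) / (2 * C)) := by
  have key : √(C / (2 * π)) * √(2 * π * C) = C := by
    rw [← sqrt_mul (by positivity), show C / (2 * π) * (2 * π * C) = C ^ 2 by field_simp,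
      sqrt_sq hC.le]
  rw [gaussianDensity, mul_div_assoc', div_eq_iff (by positivity), mul_right_comm, key]

theorem hasDerivAt_half_myErf_div_sqrt {C : ℝ} (hC : 0 ≤ C) (z : ℝ) :
    HasDerivAt (fun z => myErf (z / √(2 * C)) / 2) (gaussianDensity C z) z := by
  refine (((hasDerivAt_myErf _).comp z ((hasDerivAt_id z).div_const √(2 * C))).div_const 2
    ).congr_deriv ?_
  rw [gaussianDensity, id, div_pow, sq_sqrt (by positivity), show 2 * π * C = π * (2 * C) by ring,
    sqrt_mul pi_pos.le, neg_div]
  field_simp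

theorem hasDerivAt_sqrt_mul_exp {C : ℝ} (hC : 0 < C) (z : ℝ) :
    HasDerivAt (fun z => √(C / (2 * π)) * exp (-(z ^ 2) / (2 * C)))
      (-z * gaussianDensity C z) z := by
  refine ((((hasDerivAt_pow 2 z).neg.div_const (2 * C)).exp).const_mul √(C / (2 * π))
    ).congr_deriv ?_
  rw [show -z * gaussianDensity C z = -z / C * (C * gaussianDensity C z) by field_simp,
    mul_gaussianDensity hC]
  simp only [Pi.neg_apply]
  field_simp
  ring

theorem hasDerivAt_Gfun {C : ℝ} (hC : 0 < C) (z : ℝ) :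
    HasDerivAt (Gfun C) (myErf (z / √(2 * C)) / 2) z := by
  refine ((hasDerivAt_sqrt_mul_exp hC z).add
    ((hasDerivAt_id z).mul (hasDerivAt_half_myErf_div_sqrt hC.le z))).congr_of_eventuallyEq
    (Eventually.of_forall fun y => ?_) |>.congr_deriv ?_
  · simp only [Gfun, Pi.add_apply, Pi.mul_apply, id]
    ring
  · simp only [id]
    ring

theorem Gfun_sub_mul_sub_mul_gaussianDensity {C : ℝ} (hC : 0 < C) (z : ℝ) :
    Gfun C z - z * (myErf (z / √(2 * C)) / 2) - C * gaussianDensity C z = 0 := by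
  rw [Gfun, mul_gaussianDensity hC]
  ring

section SelfSimilar

variable {G G' G'' : ℝ → ℝ}

theorem hasDerivAt_mul_comp_div (hG : ∀ z, HasDerivAt G (G' z) z) {r : ℝ} (hr : r ≠ 0)
    (x : ℝ) : HasDerivAt (fun x => r * G (x / r)) (G' (x / r)) x :=
  (((hG _).comp x ((hasDerivAt_id x).div_const r)).const_mul r).congr_deriv
    (by rw [id]; field_simp)

theorem hasDerivAt_sqrt_sub_mul_comp_div (hG : ∀ z, HasDerivAt G (G' z) z) {T t : ℝ}
    (ht : t < T) (ξ : ℝ) :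
    HasDerivAt (fun s => √(T - s) * G (ξ / √(T - s)))
      (-(G (ξ / √(T - t)) - ξ / √(T - t) * G' (ξ / √(T - t))) / (2 * √(T - t))) t := by
  have hpos : 0 < √(T - t) := sqrt_pos.2 (sub_pos.2 ht)
  have hsqrt : HasDerivAt (fun s => √(T - s)) (1 / (2 * √(T - t)) * -1) t :=
    (hasDerivAt_sqrt (sub_pos.2 ht).ne').comp t ((hasDerivAt_id t).const_sub T)
  refine (hsqrt.mul ((hG _).comp t ((hasDerivAt_const t ξ).div hsqrt hpos.ne'))).congr_deriv ?_
  simp only [Function.comp_apply, Pi.div_apply]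
  field_simp
  ring

theorem backwardHeat_of_profile_ode {C : ℝ} (hG : ∀ z, HasDerivAt G (G' z) z)
    (hG' : ∀ z, HasDerivAt G' (G'' z) z) (hode : ∀ z, G z - z * G' z - C * G'' z = 0)
    {T t : ℝ} (ht : t < T) (ξ : ℝ) :
    deriv (fun s => √(T - s) * G (ξ / √(T - s))) t
      + C / 2 * deriv (deriv fun x => √(T - t) * G (x / √(T - t))) ξ = 0 := by
  set r := √(T - t)
  have hr : r ≠ 0 := (sqrt_pos.2 (sub_pos.2 ht)).ne'
  have hx : deriv (fun x => r * G (x / r)) = fun x => G' (x / r) :=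
    funext fun x => (hasDerivAt_mul_comp_div hG hr x).deriv
  have hxx : HasDerivAt (fun x => G' (x / r)) (G'' (ξ / r) / r) ξ :=
    ((hG' _).comp ξ ((hasDerivAt_id ξ).div_const r)).congr_deriv (by rw [id]; ring)
  rw [(hasDerivAt_sqrt_sub_mul_comp_div hG ht ξ).deriv, hx, hxx.deriv]
  calc _ = -(G (ξ / r) - ξ / r * G' (ξ / r) - C * G'' (ξ / r)) / (2 * r) := by ring
    _ = 0 := by rw [hode, neg_zero, zero_div]

end SelfSimilar

theorem tendsto_mul_Gfun_div_nhdsGT_zero {C : ℝ} (hC : 0 < C) (ξ : ℝ) :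
    Tendsto (fun r => r * Gfun C (ξ / r)) (𝓝[>] 0) (𝓝 (|ξ| / 2)) := by
  have hbdd : IsBoundedUnder (· ≤ ·) (𝓝[>] 0)
      fun r : ℝ => ‖√(C / (2 * π)) * exp (-((ξ / r) ^ 2) / (2 * C))‖ := by
    refine isBoundedUnder_of ⟨√(C / (2 * π)), fun r => ?_⟩
    rw [norm_of_nonneg (by positivity)]
    refine mul_le_of_le_one_right (sqrt_nonneg _) (exp_le_one_iff.2 ?_)
    exact div_nonpos_of_nonpos_of_nonneg (neg_nonpos.2 (sq_nonneg _)) (by positivity)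
  have hgauss := (tendsto_nhdsWithin_of_tendsto_nhds tendsto_id).zero_mul_isBoundedUnder_le hbdd
  have herf : Tendsto (fun r : ℝ => ξ * myErf (ξ * (r⁻¹ / √(2 * C))) / 2) (𝓝[>] 0)
      (𝓝 (|ξ| / 2)) :=
    ((tendsto_mul_myErf_mul_atTop ξ).comp
      (tendsto_inv_nhdsGT_zero.atTop_div_const (by positivity))).div_const 2
  refine (zero_add (|ξ| / 2) ▸ hgauss.add herf).congr' ?_
  filter_upwards [self_mem_nhdsWithin] with r (hr : 0 < r)
  simp only [Gfun, id]
  field_simp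

theorem tendsto_sqrt_sub_nhdsLT (T : ℝ) : Tendsto (fun t => √(T - t)) (𝓝[<] T) (𝓝[>] 0) := by
  refine tendsto_nhdsWithin_iff.2 ⟨?_, ?_⟩
  · exact ((continuous_sqrt.comp (continuous_const.sub continuous_id)).tendsto' T 0
      (by simp)).mono_left nhdsWithin_le_nhds
  · filter_upwards [self_mem_nhdsWithin] with t (ht : t < T)
    exact sqrt_pos.2 (sub_pos.2 ht)

/-- The self-similar function `u(t,ξ) = √(T-t) · G(ξ/√(T-t))` satisfies the
backward heat equation `u_t + (C/2) u_{ξξ} = 0` for `t < T`, and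
`u(t,ξ) → |ξ|/2` as `t → T⁻` for each fixed `ξ`. -/
theorem selfSimilar_backward_heat (C T : ℝ) (hC : 0 < C) :
    (∀ t < T, ∀ ξ : ℝ,
      deriv (fun s => Real.sqrt (T - s) * Gfun C (ξ / Real.sqrt (T - s))) t
        + (C / 2) *
          deriv (deriv (fun x => Real.sqrt (T - t) * Gfun C (x / Real.sqrt (T - t)))) ξ
        = 0) ∧
    (∀ ξ : ℝ,
      Filter.Tendsto (fun t => Real.sqrt (T - t) * Gfun C (ξ / Real.sqrt (T - t)))
        (nhdsWithin T (Set.Iio T)) (nhds (|ξ| / 2))) :=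
  ⟨fun _ ht ξ => backwardHeat_of_profile_ode (hasDerivAt_Gfun hC)
      (hasDerivAt_half_myErf_div_sqrt hC.le) (Gfun_sub_mul_sub_mul_gaussianDensity hC) ht ξ,
    fun ξ => (tendsto_mul_Gfun_div_nhdsGT_zero hC ξ).comp (tendsto_sqrt_sub_nhdsLT T)⟩
end

section
/- Let u(t, xi, eta) = c*eta + v(t, xi) where v solves the backward heat equation v_t + (C/2) v_{xi xi} = 0 and c is a nonzero constant. Then u solves the fully nonlinear PDE u_t + (C/2) * (u_{xi xi} u_eta^2 - 2 u_{xi eta} u_xi u_eta + u_{eta eta} u_xi^2) / u_eta^2 = 0. -/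
/-- If `v` solves the backward heat equation `v_t + (C/2) v_{ξξ} = 0` and
`c ≠ 0`, then `u(t,ξ,η) = c η + v(t,ξ)` solves the fully nonlinear PDE
`u_t + (C/2)(u_{ξξ} u_η² - 2 u_{ξη} u_ξ u_η + u_{ηη} u_ξ²)/u_η² = 0`. -/
theorem linear_plus_heat_solves_nonlinear_pde
    (v : ℝ → ℝ → ℝ) (c C : ℝ) (hc : c ≠ 0)
    (hv : ∀ t ξ : ℝ,
      deriv (fun s => v s ξ) t + C / 2 * deriv (deriv fun x => v t x) ξ = 0)
    (t ξ η : ℝ) :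
    let u : ℝ → ℝ → ℝ → ℝ := fun t ξ η => c * η + v t ξ
    deriv (fun s => u s ξ η) t
      + C / 2 *
        (deriv (deriv fun x => u t x η) ξ * (deriv (fun e => u t ξ e) η) ^ 2
          - 2 * deriv (fun e => deriv (fun x => u t x e) ξ) η
              * deriv (fun x => u t x η) ξ * deriv (fun e => u t ξ e) η
          + deriv (deriv fun e => u t ξ e) η * (deriv (fun x => u t x η) ξ) ^ 2)
        / (deriv (fun e => u t ξ e) η) ^ 2 = 0 := by
  intro u
  have u_t : deriv (fun s => u s ξ η) t = deriv (fun s => v s ξ) t := by simp [u]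
  have u_ξ : ∀ e, (deriv fun x => u t x e) = deriv fun x => v t x := by simp [u]
  have u_η : (deriv fun e => u t ξ e) = fun _ => c := by simp [u]
  -- `u_η ≡ c` kills `u_{ξη}` and `u_{ηη}`, and the quotient collapses to `v_{ξξ}`.
  simp only [u_t, u_ξ, u_η, deriv_const, mul_zero, zero_mul, sub_zero, add_zero, mul_div_assoc,
    mul_div_cancel_right₀ _ (pow_ne_zero 2 hc)]
  exact hv t ξ
end
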